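/- arXiv:2309.09566 — 2 statements merged into one kernel-verified Lean document; each statement's English description precedes it below -/
import Mathlib

section
/- Let R be a synchronous order on ℕ such that E = ℕ ∖ supp(R) is infinite. Then there exists a synchronous order S with supp(S) = E such that (E, S) is order-isomorphic to ℕ (respectively, to ℕ with the reversed order) and such that R + S := R ∪ S ∪ (supp(R) × E) is a complete synchronous order on ℕ; moreover (ℕ, R + S) is order-isomorphic to the lexicographic sum of (supp(R), R) followed by (E, S). -/
/-- Encoding of a pair of naturals as a word over the alphabet `Fin 3`,
where letter `0` stands for `B`, `1` for `L`, `2` for `R`. -/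
def encPair (k l : ℕ) : List (Fin 3) :=
  (List.range (max k l)).map (fun i => if i < min k l then 0 else if i < k then 1 else 2)

/-- A binary relation on ℕ is synchronous if the language of encodings of its pairs
is regular. -/
def SyncRel (R : ℕ → ℕ → Prop) : Prop :=
  Language.IsRegular {w : List (Fin 3) | ∃ k l, R k l ∧ encPair k l = w}

/-- The support of a binary relation on ℕ. -/
def supp (R : ℕ → ℕ → Prop) : Set ℕ := {x | ∃ y, R x y ∨ R y x}

/-- A (strict partial) order on ℕ: a transitive relation with no 2-cycle
(in particular irreflexive). -/
def IsOrderRel (R : ℕ → ℕ → Prop) : Prop :=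
  (∀ x y z, R x y → R y z → R x z) ∧ ¬∃ x y, R x y ∧ R y x

/-- The relation is linear if any two distinct elements of the support are comparable. -/
def IsLinearRel (R : ℕ → ℕ → Prop) : Prop :=
  ∀ x ∈ supp R, ∀ y ∈ supp R, x ≠ y → R x y ∨ R y x

/-- The restriction of a relation on ℕ to its support. -/
def restrict (R : ℕ → ℕ → Prop) : supp R → supp R → Prop := fun a b => R a b

/-- The sum `R + R'` of two orders: `R ∪ R' ∪ (supp R × supp R')`. -/
def sumRel (R S : ℕ → ℕ → Prop) : ℕ → ℕ → Prop :=
  fun a b => R a b ∨ S a b ∨ (a ∈ supp R ∧ b ∈ supp S)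

/-!
Call `X ⊆ ℕ` unary automatic if whether `n ∈ X` is decided by the state that a finite
deterministic automaton over a one-letter alphabet reaches after `n` steps (these are exactly the
ultimately periodic sets). In `enc(k,l)` the number `k` counts the letters other than `R` and `l`
those other than `L`. A subset construction shows that for a regular language `L` the numbers
`countP p w`, `w ∈ L`, form a unary automatic set; for the encodings of `R` this makes `supp R`,
hence also its complement `E`, unary automatic. Conversely, the relation `countP p (enc(k,l)) ∈ X`
with `X` unary automatic is synchronous: its language is the regular set `B*L* ∪ B*R*` of all
encodings cut down by a counter automaton. Taking `S` to be `<` or `>` restricted to `E`, both `S`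
and `R + S = R ∪ S ∪ (supp R × E)` are positive Boolean combinations of such relations and of `R`.
The remaining order-theoretic claims hold for any sum of two orders with disjoint supports.
-/

open List

theorem encPair_eq (k l : ℕ) :
    encPair k l = replicate (min k l) 0 ++ replicate (k - l) 1 ++ replicate (l - k) 2 := by
  apply List.ext_getElem
  · simp only [encPair, length_map, length_range, length_append, length_replicate]
    omega
  · intro i h₁ _
    simp only [encPair, length_map, length_range] at h₁
    simp only [encPair, getElem_map, getElem_range, getElem_append, getElem_replicate,
      length_append, length_replicate]
    split_ifs <;> first | rfl | omega

theorem countP_encPair (p : Fin 3 → Bool) (k l : ℕ) :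
    (encPair k l).countP p =
      (if p 0 then min k l else 0) + (if p 1 then k - l else 0) + (if p 2 then l - k else 0) := by
  simp [encPair_eq, countP_append, countP_replicate, add_assoc]

theorem countP_ne_two_encPair (k l : ℕ) : (encPair k l).countP (· ≠ 2) = k := by
  simp [countP_encPair, add_comm]

theorem countP_ne_one_encPair (k l : ℕ) : (encPair k l).countP (· ≠ 1) = l := by
  simpa [countP_encPair, add_comm, min_comm] using Nat.sub_add_min_cancel l k

theorem countP_eq_two_encPair (k l : ℕ) : (encPair k l).countP (· = 2) = l - k := by
  simp [countP_encPair]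

theorem countP_eq_one_encPair (k l : ℕ) : (encPair k l).countP (· = 1) = k - l := by
  simp [countP_encPair]

theorem encPair_inj {k l k' l' : ℕ} : encPair k l = encPair k' l' ↔ k = k' ∧ l = l' := by
  refine ⟨fun h => ⟨?_, ?_⟩, by rintro ⟨rfl, rfl⟩; rfl⟩
  · simpa only [countP_ne_two_encPair] using congrArg (countP (· ≠ 2)) h
  · simpa only [countP_ne_one_encPair] using congrArg (countP (· ≠ 1)) h

def encRange : Language (Fin 3) := {w | ∃ k l, encPair k l = w}

theorem mem_encRange_iff {w : List (Fin 3)} :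
    w ∈ encRange ↔ ∃ m n, ∃ c ≠ (0 : Fin 3), w = replicate m 0 ++ replicate n c := by
  constructor
  · rintro ⟨k, l, rfl⟩
    rcases le_total k l with h | h
    · exact ⟨k, l - k, 2, by decide, by simp [encPair_eq, h, Nat.sub_eq_zero_of_le h]⟩
    · exact ⟨l, k - l, 1, by decide, by simp [encPair_eq, h, Nat.sub_eq_zero_of_le h]⟩
  · rintro ⟨m, n, c, hc, rfl⟩
    fin_cases c
    · exact absurd rfl hc
    · exact ⟨m + n, m, by simp [encPair_eq]⟩
    · exact ⟨m, m + n, by simp [encPair_eq]⟩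

theorem cons_zero_mem_encRange {w : List (Fin 3)} : 0 :: w ∈ encRange ↔ w ∈ encRange := by
  simp only [mem_encRange_iff]
  constructor
  · rintro ⟨m, n, c, hc, h⟩
    rcases m with _ | m
    · rcases n with _ | n
      · simp at h
      · exact absurd (cons_eq_cons.mp h).1.symm hc
    · exact ⟨m, n, c, hc, by simpa [replicate_succ] using h⟩
  · rintro ⟨m, n, c, hc, rfl⟩
    exact ⟨m + 1, n, c, hc, rfl⟩

theorem cons_mem_encRange {c : Fin 3} (hc : c ≠ 0) {w : List (Fin 3)} :
    c :: w ∈ encRange ↔ ∀ x ∈ w, x = c := by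
  rw [mem_encRange_iff]
  constructor
  · rintro ⟨m, n, d, -, h⟩
    rcases m with _ | m
    · rcases n with _ | n
      · simp at h
      · obtain ⟨rfl, rfl⟩ := cons_eq_cons.mp h
        exact fun x => eq_of_mem_replicate
    · exact absurd (cons_eq_cons.mp h).1 hc
  · intro hw
    exact ⟨0, w.length + 1, c, hc, by rw [replicate_succ, ← eq_replicate_iff.mpr ⟨rfl, hw⟩]; rfl⟩

-- The state is the last letter read; a letter may only follow `0` or itself.
def encRangeDFA : DFA (Fin 3) (Option (Fin 3)) where
  step q c := q.bind fun s => if s = 0 ∨ s = c then some c else none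
  start := some 0
  accept := {q | q.isSome}

theorem encRangeDFA_evalFrom_none (w : List (Fin 3)) : encRangeDFA.evalFrom none w = none := by
  induction w with
  | nil => rfl
  | cons c w ih => exact ih

theorem isSome_encRangeDFA_evalFrom (s : Fin 3) (w : List (Fin 3)) :
    (encRangeDFA.evalFrom (some s) w).isSome ↔ s :: w ∈ encRange := by
  induction w generalizing s with
  | nil =>
    refine iff_of_true rfl ?_
    by_cases hs : s = 0
    · exact hs ▸ cons_zero_mem_encRange.mpr ⟨0, 0, rfl⟩
    · exact (cons_mem_encRange hs).mpr (by simp)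
  | cons c w ih =>
    by_cases h : s = 0 ∨ s = c
    · have hstep : encRangeDFA.evalFrom (some s) (c :: w) = encRangeDFA.evalFrom (some c) w := by
        simp [encRangeDFA, h]
      rw [hstep, ih]
      by_cases hs : s = 0
      · exact hs ▸ cons_zero_mem_encRange.symm
      · obtain rfl : s = c := h.resolve_left hs
        simp [cons_mem_encRange hs]
    · have hstep : encRangeDFA.evalFrom (some s) (c :: w) = none := by
        rw [DFA.evalFrom_cons, ← encRangeDFA_evalFrom_none w]
        simp [encRangeDFA, h]
      push Not at h
      simp [hstep, cons_mem_encRange h.1, Ne.symm h.2]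

theorem isRegular_encRange : encRange.IsRegular :=
  ⟨_, inferInstance, encRangeDFA, Set.ext fun w =>
    (isSome_encRangeDFA_evalFrom 0 w).trans cons_zero_mem_encRange⟩

def IsUnaryAutomatic (X : Set ℕ) : Prop :=
  ∃ (σ : Type) (_ : Finite σ) (f : σ → σ) (s : σ) (P : Set σ), ∀ n, n ∈ X ↔ f^[n] s ∈ P

namespace IsUnaryAutomatic

variable {X Y : Set ℕ}

theorem compl (hX : IsUnaryAutomatic X) : IsUnaryAutomatic Xᶜ := by
  obtain ⟨σ, _, f, s, P, hP⟩ := hX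
  exact ⟨σ, inferInstance, f, s, Pᶜ, fun n => (hP n).not⟩

theorem union (hX : IsUnaryAutomatic X) (hY : IsUnaryAutomatic Y) : IsUnaryAutomatic (X ∪ Y) := by
  obtain ⟨σ, _, f, s, P, hP⟩ := hX
  obtain ⟨τ, _, g, t, Q, hQ⟩ := hY
  exact ⟨σ × τ, inferInstance, Prod.map f g, (s, t), {q | q.1 ∈ P ∨ q.2 ∈ Q}, fun n => by
    simp [Prod.map_iterate, hP, hQ]⟩

theorem isRegular_countP_mem {α : Type*} (hX : IsUnaryAutomatic X) (p : α → Bool) :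
    Language.IsRegular {w : List α | w.countP p ∈ X} := by
  obtain ⟨σ, _, f, s, P, hP⟩ := hX
  have := Fintype.ofFinite σ
  let M : DFA α σ := ⟨fun q a => if p a then f q else q, s, P⟩
  have hM : ∀ q w, M.evalFrom q w = f^[w.countP p] q := by
    intro q w
    induction w generalizing q with
    | nil => rfl
    | cons a w ih =>
      by_cases ha : p a <;> simp [M, ha, ih, Function.iterate_succ_apply]
  refine ⟨σ, inferInstance, M, ?_⟩
  ext w
  rw [DFA.mem_accepts, DFA.eval, hM]
  exact (hP _).symm

end IsUnaryAutomatic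

theorem isUnaryAutomatic_pos : IsUnaryAutomatic {n | 0 < n} :=
  ⟨Bool, inferInstance, fun _ => true, false, {true}, fun n => by
    cases n <;> simp [Function.iterate_succ_apply']⟩

theorem exists_append_cons_of_countP_eq_succ {α : Type*} {p : α → Bool} {w : List α} {n : ℕ}
    (h : w.countP p = n + 1) :
    ∃ u a v, w = u ++ a :: v ∧ u.countP p = n ∧ p a ∧ ∀ x ∈ v, ¬ p x := by
  induction w using List.reverseRecOn with
  | nil => simp at h
  | append_singleton w x ih =>
    by_cases hx : p x
    · exact ⟨w, x, [], rfl, by simpa [hx] using h, hx, by simp⟩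
    · obtain ⟨u, a, v, rfl, hu, ha, hv⟩ := ih (by simpa [hx] using h)
      exact ⟨u, a, v ++ [x], by simp, hu, ha, by
        simp only [mem_append, mem_singleton]
        rintro y (hy | rfl)
        exacts [hv y hy, hx]⟩

theorem Language.IsRegular.isUnaryAutomatic_countP_image {α : Type*} {L : Language α}
    (hL : L.IsRegular) (p : α → Bool) : IsUnaryAutomatic {n | ∃ w ∈ L, w.countP p = n} := by
  obtain ⟨σ, _, M, rfl⟩ := hL
  let A : ℕ → Set σ := fun n => {q | ∃ w, w.countP p = n ∧ M.eval w = q}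
  -- One step of the subset construction: a `p`-letter followed by a run of other letters.
  let G : Set σ → Set σ := fun S =>
    {q | ∃ s ∈ S, ∃ a, p a ∧ ∃ v, (∀ x ∈ v, ¬ p x) ∧ M.evalFrom (M.step s a) v = q}
  have hA : ∀ n, A (n + 1) = G (A n) := by
    intro n
    ext q
    constructor
    · rintro ⟨w, hw, rfl⟩
      obtain ⟨u, a, v, rfl, hu, ha, hv⟩ := exists_append_cons_of_countP_eq_succ hw
      exact ⟨M.eval u, ⟨u, hu, rfl⟩, a, ha, v, hv, by simp [DFA.eval, DFA.evalFrom_of_append]⟩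
    · rintro ⟨_, ⟨u, hu, rfl⟩, a, ha, v, hv, rfl⟩
      refine ⟨u ++ a :: v, ?_, by simp [DFA.eval, DFA.evalFrom_of_append]⟩
      simp [countP_append, hu, ha, countP_eq_zero.mpr hv]
  have hiter : ∀ n, A n = G^[n] (A 0) := by
    intro n
    induction n with
    | zero => rfl
    | succ n ih => rw [hA, ih, Function.iterate_succ_apply']
  exact ⟨Set σ, inferInstance, G, A 0, {S | ∃ q ∈ S, q ∈ M.accept}, fun n => by
    rw [← hiter]
    exact ⟨fun ⟨w, hw, hn⟩ => ⟨_, ⟨w, hn, rfl⟩, hw⟩, fun ⟨_, ⟨w, hn, rfl⟩, hw⟩ => ⟨w, hw, hn⟩⟩⟩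

section Synchronous

variable {R S : ℕ → ℕ → Prop}

def encLang (R : ℕ → ℕ → Prop) : Language (Fin 3) := {w | ∃ k l, R k l ∧ encPair k l = w}

theorem syncRel_iff : SyncRel R ↔ (encLang R).IsRegular := Iff.rfl

theorem SyncRel.or (hR : SyncRel R) (hS : SyncRel S) : SyncRel fun k l => R k l ∨ S k l := by
  have h : encLang (fun k l => R k l ∨ S k l) = encLang R + encLang S := by
    ext w
    constructor
    · rintro ⟨k, l, h | h, rfl⟩
      exacts [Or.inl ⟨k, l, h, rfl⟩, Or.inr ⟨k, l, h, rfl⟩]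
    · rintro (⟨k, l, h, rfl⟩ | ⟨k, l, h, rfl⟩)
      exacts [⟨k, l, Or.inl h, rfl⟩, ⟨k, l, Or.inr h, rfl⟩]
  rw [syncRel_iff, h]
  exact hR.add hS

theorem SyncRel.and (hR : SyncRel R) (hS : SyncRel S) : SyncRel fun k l => R k l ∧ S k l := by
  have h : encLang (fun k l => R k l ∧ S k l) = encLang R ⊓ encLang S := by
    ext w
    constructor
    · rintro ⟨k, l, ⟨hkl, hkl'⟩, rfl⟩
      exact ⟨⟨k, l, hkl, rfl⟩, ⟨k, l, hkl', rfl⟩⟩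
    · rintro ⟨⟨k, l, hkl, rfl⟩, ⟨k', l', hkl', h⟩⟩
      obtain ⟨rfl, rfl⟩ := encPair_inj.mp h.symm
      exact ⟨k, l, ⟨hkl, hkl'⟩, rfl⟩
  rw [syncRel_iff, h]
  exact hR.inf hS

theorem IsUnaryAutomatic.syncRel_countP_mem {X : Set ℕ} (hX : IsUnaryAutomatic X)
    (p : Fin 3 → Bool) : SyncRel fun k l => (encPair k l).countP p ∈ X := by
  have h : encLang (fun k l => (encPair k l).countP p ∈ X) =
      encRange ⊓ {w | w.countP p ∈ X} := by
    ext w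
    constructor
    · rintro ⟨k, l, h, rfl⟩
      exact ⟨⟨k, l, rfl⟩, h⟩
    · rintro ⟨⟨k, l, rfl⟩, h⟩
      exact ⟨k, l, h, rfl⟩
  rw [syncRel_iff, h]
  exact isRegular_encRange.inf (hX.isRegular_countP_mem p)

theorem IsUnaryAutomatic.syncRel_fst_mem {X : Set ℕ} (hX : IsUnaryAutomatic X) :
    SyncRel fun k _ => k ∈ X := by
  simpa only [countP_ne_two_encPair] using hX.syncRel_countP_mem (· ≠ 2)

theorem IsUnaryAutomatic.syncRel_snd_mem {X : Set ℕ} (hX : IsUnaryAutomatic X) :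
    SyncRel fun _ l => l ∈ X := by
  simpa only [countP_ne_one_encPair] using hX.syncRel_countP_mem (· ≠ 1)

theorem syncRel_lt : SyncRel fun k l => k < l := by
  simpa only [countP_eq_two_encPair, Set.mem_ofPred_eq, Nat.sub_pos_iff_lt]
    using isUnaryAutomatic_pos.syncRel_countP_mem (· = 2)

theorem syncRel_gt : SyncRel fun k l => l < k := by
  simpa only [countP_eq_one_encPair, Set.mem_ofPred_eq, Nat.sub_pos_iff_lt]
    using isUnaryAutomatic_pos.syncRel_countP_mem (· = 1)

theorem SyncRel.isUnaryAutomatic_supp (hR : SyncRel R) : IsUnaryAutomatic (supp R) := by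
  have h : supp R = {n | ∃ w ∈ encLang R, w.countP (· ≠ 2) = n} ∪
      {n | ∃ w ∈ encLang R, w.countP (· ≠ 1) = n} := by
    ext n
    simp only [supp, encLang, Set.mem_union, Set.mem_ofPred_eq]
    constructor
    · rintro ⟨m, h | h⟩
      · exact Or.inl ⟨_, ⟨n, m, h, rfl⟩, countP_ne_two_encPair n m⟩
      · exact Or.inr ⟨_, ⟨m, n, h, rfl⟩, countP_ne_one_encPair m n⟩
    · rintro (⟨_, ⟨k, l, h, rfl⟩, rfl⟩ | ⟨_, ⟨k, l, h, rfl⟩, rfl⟩)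
      · exact ⟨l, Or.inl (by rwa [countP_ne_two_encPair])⟩
      · exact ⟨k, Or.inr (by rwa [countP_ne_one_encPair])⟩
  rw [h]
  exact (hR.isUnaryAutomatic_countP_image _).union (hR.isUnaryAutomatic_countP_image _)

theorem SyncRel.sumRel (hR : SyncRel R) (hS : SyncRel S) : SyncRel (sumRel R S) :=
  hR.or (hS.or (hR.isUnaryAutomatic_supp.syncRel_fst_mem.and
    hS.isUnaryAutomatic_supp.syncRel_snd_mem))

end Synchronous

section Order

variable {R S : ℕ → ℕ → Prop}

theorem left_mem_supp {a b : ℕ} (h : R a b) : a ∈ supp R := ⟨b, Or.inl h⟩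

theorem right_mem_supp {a b : ℕ} (h : R a b) : b ∈ supp R := ⟨a, Or.inr h⟩

theorem supp_sumRel (R S : ℕ → ℕ → Prop) : supp (sumRel R S) = supp R ∪ supp S := by
  ext x
  constructor
  · rintro ⟨y, (h | h | ⟨h, -⟩) | (h | h | ⟨-, h⟩)⟩
    exacts [Or.inl (left_mem_supp h), Or.inr (left_mem_supp h), Or.inl h,
      Or.inl (right_mem_supp h), Or.inr (right_mem_supp h), Or.inr h]
  · rintro (⟨y, h | h⟩ | ⟨y, h | h⟩)
    exacts [⟨y, Or.inl (Or.inl h)⟩, ⟨y, Or.inr (Or.inl h)⟩, ⟨y, Or.inl (Or.inr (Or.inl h))⟩,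
      ⟨y, Or.inr (Or.inr (Or.inl h))⟩]

theorem IsOrderRel.sumRel (hR : IsOrderRel R) (hS : IsOrderRel S)
    (hd : Disjoint (supp R) (supp S)) : IsOrderRel (sumRel R S) := by
  refine ⟨fun x y z hxy hyz => ?_, fun ⟨x, y, hxy, hyx⟩ => ?_⟩ <;> unfold _root_.sumRel at *
  all_goals grind [hR.1, hS.1, hR.2, hS.2, left_mem_supp (R := R), right_mem_supp (R := R),
    left_mem_supp (R := S), right_mem_supp (R := S)]

theorem nonempty_relIso_sumLex (hd : Disjoint (supp R) (supp S)) :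
    Nonempty (restrict (sumRel R S) ≃r Sum.Lex (restrict R) (restrict S)) := by
  classical
  refine ⟨RelIso.symm
    ⟨(Equiv.Set.union hd).symm.trans (Equiv.setCongr (supp_sumRel R S).symm), ?_⟩⟩
  rintro (⟨a, ha⟩ | ⟨a, ha⟩) (⟨b, hb⟩ | ⟨b, hb⟩) <;>
    simp only [restrict, _root_.sumRel, Equiv.trans_apply, Equiv.Set.union_symm_apply_left,
      Equiv.Set.union_symm_apply_right, Equiv.setCongr_apply, Sum.lex_inl_inl, Sum.lex_inr_inr,
      Sum.Lex.sep, Sum.lex_inr_inl]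
  all_goals grind [left_mem_supp (R := R), right_mem_supp (R := R),
    left_mem_supp (R := S), right_mem_supp (R := S)]

theorem IsOrderRel.flip (hR : IsOrderRel R) : IsOrderRel (flip R) :=
  ⟨fun x y z hxy hyz => hR.1 z y x hyz hxy, fun ⟨x, y, hxy, hyx⟩ => hR.2 ⟨x, y, hyx, hxy⟩⟩

theorem supp_flip (R : ℕ → ℕ → Prop) : supp (flip R) = supp R :=
  Set.ext fun _ => exists_congr fun _ => or_comm

end Order

def ltOn (E : Set ℕ) (k l : ℕ) : Prop := k ∈ E ∧ l ∈ E ∧ k < l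

section LtOn

variable {E : Set ℕ}

theorem isOrderRel_ltOn (E : Set ℕ) : IsOrderRel (ltOn E) :=
  ⟨fun _ _ _ hxy hyz => ⟨hxy.1, hyz.2.1, hxy.2.2.trans hyz.2.2⟩,
    fun ⟨_, _, hxy, hyx⟩ => (hxy.2.2.trans hyx.2.2).false⟩

theorem supp_ltOn (hE : E.Infinite) : supp (ltOn E) = E := by
  ext x
  refine ⟨fun ⟨y, h⟩ => h.elim (·.1) (·.2.1), fun hx => ?_⟩
  obtain ⟨y, hy, hxy⟩ := hE.exists_gt x
  exact ⟨y, Or.inl ⟨hx, hy, hxy⟩⟩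

theorem supp_flip_ltOn (hE : E.Infinite) : supp (flip (ltOn E)) = E :=
  (supp_flip _).trans (supp_ltOn hE)

theorem IsUnaryAutomatic.syncRel_ltOn (hE : IsUnaryAutomatic E) : SyncRel (ltOn E) :=
  hE.syncRel_fst_mem.and (hE.syncRel_snd_mem.and syncRel_lt)

theorem IsUnaryAutomatic.syncRel_flip_ltOn (hE : IsUnaryAutomatic E) : SyncRel (flip (ltOn E)) :=
  hE.syncRel_snd_mem.and (hE.syncRel_fst_mem.and syncRel_gt)

theorem nonempty_restrict_ltOn_relIso (hE : E.Infinite) :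
    Nonempty (restrict (ltOn E) ≃r ((· < ·) : ℕ → ℕ → Prop)) := by
  classical
  have : Infinite (supp (ltOn E)) := by rw [supp_ltOn hE]; exact hE.to_subtype
  let e := (Nat.Subtype.orderIsoOfNat (supp (ltOn E))).symm
  have hmem : ∀ x : supp (ltOn E), (x : ℕ) ∈ E := fun x => by simpa only [supp_ltOn hE] using x.2
  exact ⟨⟨e.toEquiv, fun {a b} => by simp [restrict, ltOn, hmem]⟩⟩

theorem nonempty_restrict_flip_ltOn_relIso (hE : E.Infinite) :
    Nonempty (restrict (flip (ltOn E)) ≃r ((· > ·) : ℕ → ℕ → Prop)) := by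
  classical
  have : Infinite (supp (flip (ltOn E))) := by rw [supp_flip_ltOn hE]; exact hE.to_subtype
  let e := (Nat.Subtype.orderIsoOfNat (supp (flip (ltOn E)))).symm
  have hmem : ∀ x : supp (flip (ltOn E)), (x : ℕ) ∈ E := fun x => by
    simpa only [supp_flip_ltOn hE] using x.2
  exact ⟨⟨e.toEquiv, fun {a b} => by simp [restrict, ltOn, flip, hmem]⟩⟩

end LtOn

theorem sumRel_complete_of_supp_eq_compl {R S : ℕ → ℕ → Prop} (hRs : SyncRel R)
    (hRo : IsOrderRel R) (hSs : SyncRel S) (hSo : IsOrderRel S) (hsupp : supp S = (supp R)ᶜ) :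
    SyncRel (sumRel R S) ∧ IsOrderRel (sumRel R S) ∧ supp (sumRel R S) = Set.univ ∧
      Nonempty (restrict (sumRel R S) ≃r Sum.Lex (restrict R) (restrict S)) := by
  have hd : Disjoint (supp R) (supp S) := hsupp ▸ disjoint_compl_right
  exact ⟨hRs.sumRel hSs, hRo.sumRel hSo hd, by rw [supp_sumRel, hsupp, Set.union_compl_self],
    nonempty_relIso_sumLex hd⟩

theorem infinite_complement_completion (R : ℕ → ℕ → Prop)
    (hs : SyncRel R) (ho : IsOrderRel R) (hinf : (supp R)ᶜ.Infinite) :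
    (∃ S : ℕ → ℕ → Prop, SyncRel S ∧ IsOrderRel S ∧ supp S = (supp R)ᶜ ∧
      Nonempty (restrict S ≃r ((· < ·) : ℕ → ℕ → Prop)) ∧
      SyncRel (sumRel R S) ∧ IsOrderRel (sumRel R S) ∧ supp (sumRel R S) = Set.univ ∧
      Nonempty (restrict (sumRel R S) ≃r Sum.Lex (restrict R) (restrict S))) ∧
    (∃ S : ℕ → ℕ → Prop, SyncRel S ∧ IsOrderRel S ∧ supp S = (supp R)ᶜ ∧
      Nonempty (restrict S ≃r ((· > ·) : ℕ → ℕ → Prop)) ∧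
      SyncRel (sumRel R S) ∧ IsOrderRel (sumRel R S) ∧ supp (sumRel R S) = Set.univ ∧
      Nonempty (restrict (sumRel R S) ≃r Sum.Lex (restrict R) (restrict S))) := by
  have hE : IsUnaryAutomatic (supp R)ᶜ := hs.isUnaryAutomatic_supp.compl
  exact ⟨⟨ltOn (supp R)ᶜ, hE.syncRel_ltOn, isOrderRel_ltOn _, supp_ltOn hinf,
      nonempty_restrict_ltOn_relIso hinf,
      sumRel_complete_of_supp_eq_compl hs ho hE.syncRel_ltOn (isOrderRel_ltOn _)
        (supp_ltOn hinf)⟩,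
    ⟨flip (ltOn (supp R)ᶜ), hE.syncRel_flip_ltOn, (isOrderRel_ltOn _).flip, supp_flip_ltOn hinf,
      nonempty_restrict_flip_ltOn_relIso hinf,
      sumRel_complete_of_supp_eq_compl hs ho hE.syncRel_flip_ltOn (isOrderRel_ltOn _).flip
        (supp_flip_ltOn hinf)⟩⟩
end

section
/- A complete synchronous order R on ℕ has an infinite antichain if and only if there exist a ∈ ℕ and p > 0 such that the arithmetic progression {a + kp : k ∈ ℕ} is an antichain of R. -/
/-- A chain of an order `R`: a subset of the support whose elements are pairwise
comparable by `R`. -/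
def IsChainOf (R : ℕ → ℕ → Prop) (C : Set ℕ) : Prop :=
  C ⊆ supp R ∧ ∀ a ∈ C, ∀ b ∈ C, a ≠ b → R a b ∨ R b a

/-- An antichain of an order `R`: a subset of the support no two distinct elements
of which are comparable by `R`. -/
def IsAntichainOf (R : ℕ → ℕ → Prop) (A : Set ℕ) : Prop :=
  A ⊆ supp R ∧ ∀ a ∈ A, ∀ b ∈ A, a ≠ b → ¬R a b ∧ ¬R b a

/- ### Auxiliary lemmas -/

/-- Iterates of a self-map of a finite type are eventually periodic with
preperiod at most `card` and period dividing `card !`. -/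
lemma iterate_eq_of_mod_factorial {α : Type*} [Fintype α] (f : α → α) (x : α)
    {m m' : ℕ} (hm : Fintype.card α ≤ m) (hm' : Fintype.card α ≤ m')
    (h : m % Nat.factorial (Fintype.card α) = m' % Nat.factorial (Fintype.card α)) :
    f^[m] x = f^[m'] x := by
  set n := Fintype.card α with hn
  -- find i < j ≤ n with f^[i] x = f^[j] x
  obtain ⟨i, hi, j, hj, hne, heq⟩ :=
    Finset.exists_ne_map_eq_of_card_lt_of_maps_to
      (s := Finset.range (n+1)) (t := (Finset.univ : Finset α))
      (by simp [hn]) (fun i _ => Finset.mem_univ (f^[i] x))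
  simp only [Finset.mem_range] at hi hj
  -- normalize so i < j
  wlog hij : i < j generalizing i j
  · exact this j i hne.symm heq.symm hj hi (by omega)
  set c := j - i with hc
  have hc1 : 0 < c := by omega
  have hcn : c ≤ n := by omega
  have hcd : c ∣ Nat.factorial n := Nat.dvd_factorial hc1 hcn
  -- one-step periodicity from index i on
  have hstep : ∀ t, i ≤ t → f^[t + c] x = f^[t] x := by
    intro t ht
    obtain ⟨s, rfl⟩ := Nat.exists_eq_add_of_le ht
    have h1 : i + s + c = s + j := by omega
    rw [h1, Function.iterate_add_apply, ← heq, ← Function.iterate_add_apply]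
    ring_nf
  have hper : ∀ t k, i ≤ t → f^[t + k * c] x = f^[t] x := by
    intro t k ht
    induction k with
    | zero => simp
    | succ k ih =>
      have : t + (k+1) * c = (t + k * c) + c := by ring
      rw [this, hstep _ (by omega), ih]
  -- conclude
  have hmc : m % c = m' % c := by
    have h1 : m % Nat.factorial n % c = m % c := Nat.mod_mod_of_dvd m hcd
    have h2 : m' % Nat.factorial n % c = m' % c := Nat.mod_mod_of_dvd m' hcd
    rw [← h1, ← h2, h]
  have him : i ≤ m := by omega
  have him' : i ≤ m' := by omega
  rcases le_total m m' with hle | hle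
  · obtain ⟨k, hk⟩ := (Nat.modEq_iff_dvd' hle).mp hmc
    have : m' = m + k * c := by rw [Nat.mul_comm] at hk; omega
    rw [this, hper m k him]
  · obtain ⟨k, hk⟩ := (Nat.modEq_iff_dvd' hle).mp hmc.symm
    have : m = m' + k * c := by rw [Nat.mul_comm] at hk; omega
    rw [this, hper m' k him']

lemma evalFrom_replicate {σ : Type*} (M : DFA (Fin 3) σ) (s : σ) (c : Fin 3) (k : ℕ) :
    M.evalFrom s (List.replicate k c) = (fun q => M.step q c)^[k] s := by
  induction k generalizing s with
  | zero => rfl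
  | succ k ih =>
    rw [List.replicate_succ]
    show M.evalFrom (M.step s c) (List.replicate k c) = _
    rw [ih, Function.iterate_succ_apply]

lemma range_map_ite (a b : ℕ) (x y : Fin 3) :
    (List.range (a+b)).map (fun i => if i < a then x else y) =
      List.replicate a x ++ List.replicate b y := by
  rw [List.range_add, List.map_append, List.map_map]
  congr 1
  · have : ∀ i ∈ List.range a, (if i < a then x else y) = x := by
      intro i hi; simp only [List.mem_range] at hi; simp [hi]
    rw [List.map_congr_left this]
    simpa using List.map_const' (List.range a) x
  · have : ∀ i ∈ List.range b, ((fun i => if i < a then x else y) ∘ (a + ·)) i = y := by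
      intro i hi; simp [Function.comp]
    rw [List.map_congr_left this]
    simpa using List.map_const' (List.range b) y

lemma encPair_le (n m : ℕ) :
    encPair n (n + m) = List.replicate n (0 : Fin 3) ++ List.replicate m 2 := by
  have h1 : max n (n+m) = n + m := by omega
  have h2 : min n (n+m) = n := by omega
  rw [encPair, h1, h2, ← range_map_ite n m 0 2]
  apply List.map_congr_left
  intro i _
  by_cases hi : i < n <;> simp [hi]

lemma encPair_ge (n m : ℕ) :
    encPair (n + m) n = List.replicate n (0 : Fin 3) ++ List.replicate m 1 := by
  have h1 : max (n+m) n = n + m := by omega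
  have h2 : min (n+m) n = n := by omega
  rw [encPair, h1, h2, ← range_map_ite n m 0 1]
  apply List.map_congr_left
  intro i hi
  simp only [List.mem_range] at hi
  by_cases h : i < n <;> simp [h, hi]

lemma count_rep_rep (a x y : Fin 3) (n m : ℕ) :
    List.count a (List.replicate n x ++ List.replicate m y) =
      (if x = a then n else 0) + (if y = a then m else 0) := by
  simp [List.count_append, List.count_replicate, beq_iff_eq]

/-- Injectivity of the encoding against `B^n R^m` words. -/
lemma encPair_eq_BR {k l n m : ℕ} (hm : 0 < m)
    (h : encPair k l = List.replicate n (0 : Fin 3) ++ List.replicate m 2) :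
    k = n ∧ l = n + m := by
  rcases le_or_gt k l with hkl | hkl
  · obtain ⟨d, rfl⟩ := Nat.exists_eq_add_of_le hkl
    rw [encPair_le] at h
    have h0 := congrArg (List.count (0 : Fin 3)) h
    have h2 := congrArg (List.count (2 : Fin 3)) h
    rw [count_rep_rep, count_rep_rep] at h0 h2
    simp at h0 h2
    omega
  · obtain ⟨d, rfl⟩ := Nat.exists_eq_add_of_le hkl.le
    rw [encPair_ge] at h
    have h2 := congrArg (List.count (2 : Fin 3)) h
    rw [count_rep_rep, count_rep_rep] at h2
    simp at h2
    omega

/-- Injectivity of the encoding against `B^n L^m` words. -/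
lemma encPair_eq_BL {k l n m : ℕ} (hm : 0 < m)
    (h : encPair k l = List.replicate n (0 : Fin 3) ++ List.replicate m 1) :
    k = n + m ∧ l = n := by
  rcases le_or_gt k l with hkl | hkl
  · obtain ⟨d, rfl⟩ := Nat.exists_eq_add_of_le hkl
    rw [encPair_le] at h
    have h1 := congrArg (List.count (1 : Fin 3)) h
    rw [count_rep_rep, count_rep_rep] at h1
    simp at h1
    omega
  · obtain ⟨d, rfl⟩ := Nat.exists_eq_add_of_le hkl.le
    rw [encPair_ge] at h
    have h0 := congrArg (List.count (0 : Fin 3)) h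
    have h1 := congrArg (List.count (1 : Fin 3)) h
    rw [count_rep_rep, count_rep_rep] at h0 h1
    simp at h0 h1
    omega

lemma mem_lang_BR {R : ℕ → ℕ → Prop} {n m : ℕ} (hm : 0 < m) :
    (List.replicate n (0 : Fin 3) ++ List.replicate m 2) ∈
      {w : List (Fin 3) | ∃ k l, R k l ∧ encPair k l = w} ↔ R n (n + m) := by
  constructor
  · rintro ⟨k, l, hR, hw⟩
    obtain ⟨rfl, rfl⟩ := encPair_eq_BR hm hw
    exact hR
  · intro h
    exact ⟨n, n + m, h, encPair_le n m⟩

lemma mem_lang_BL {R : ℕ → ℕ → Prop} {n m : ℕ} (hm : 0 < m) :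
    (List.replicate n (0 : Fin 3) ++ List.replicate m 1) ∈
      {w : List (Fin 3) | ∃ k l, R k l ∧ encPair k l = w} ↔ R (n + m) n := by
  constructor
  · rintro ⟨k, l, hR, hw⟩
    obtain ⟨rfl, rfl⟩ := encPair_eq_BL hm hw
    exact hR
  · intro h
    exact ⟨n + m, n, h, encPair_ge n m⟩

theorem infinite_antichain_iff_arithmetic_progression (R : ℕ → ℕ → Prop)
    (hs : SyncRel R) (ho : IsOrderRel R) (hc : supp R = Set.univ) :
    (∃ A : Set ℕ, A.Infinite ∧ IsAntichainOf R A) ↔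
    (∃ a p : ℕ, 0 < p ∧ IsAntichainOf R {x | ∃ k : ℕ, x = a + k * p}) := by
  constructor
  · rintro ⟨A, hAinf, hAsub, hAanti⟩
    obtain ⟨σ, hfin, M, hM⟩ := hs
    set n := Fintype.card σ with hn
    set P := Nat.factorial n with hP
    have hP0 : 0 < P := Nat.factorial_pos n
    have hnP : n ≤ P := Nat.self_le_factorial n
    -- the key claim, given x < y in A with n ≤ x and P ∣ y - x
    have key : ∀ x y : ℕ, x ∈ A → y ∈ A → n ≤ x → x < y → P ∣ y - x →
        ∃ a p : ℕ, 0 < p ∧ IsAntichainOf R {z | ∃ k : ℕ, z = a + k * p} := by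
      intro x y hxA hyA hnx hxy hdvd
      set d := y - x with hd
      have hy : y = x + d := by omega
      have hd0 : 0 < d := by omega
      have hPd : P ≤ d := Nat.le_of_dvd hd0 hdvd
      have hxyne : x ≠ y := by omega
      have hanti_xy := hAanti x hxA y hyA hxyne
      -- evaluation of B^u c^m words
      have hmem : ∀ (c : Fin 3) (u' m' : ℕ),
          (List.replicate u' (0 : Fin 3) ++ List.replicate m' c) ∈ M.accepts ↔
            (fun q => M.step q c)^[m'] ((fun q => M.step q 0)^[u'] M.start) ∈ M.accept := by
        intro c u' m'
        rw [DFA.mem_accepts]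
        show M.evalFrom M.start _ ∈ M.accept ↔ _
        rw [DFA.evalFrom_of_append, evalFrom_replicate, evalFrom_replicate]
      refine ⟨x, P, hP0, ?_, ?_⟩
      · rw [hc]; exact Set.subset_univ _
      · -- pairwise incomparability
        have main : ∀ i j : ℕ, i < j →
            ¬R (x + i * P) (x + j * P) ∧ ¬R (x + j * P) (x + i * P) := by
          intro i j hij
          set u := x + i * P with hu
          set m := (j - i) * P with hm
          have hum : x + j * P = u + m := by
            have h1 : i * P + (j - i) * P = j * P := by
              rw [← Nat.add_mul]; congr 1; omega
            rw [hu, hm]; omega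
          have hm0 : 0 < m := by
            have : 1 ≤ j - i := by omega
            calc 0 < P := hP0
            _ ≤ (j - i) * P := Nat.le_mul_of_pos_left P (by omega)
          have hPm : P ∣ m := ⟨j - i, by rw [hm, Nat.mul_comm]⟩
          -- state after B-prefix is the same for u and x
          have hB : (fun q => M.step q 0)^[u] M.start = (fun q => M.step q 0)^[x] M.start := by
            have hPm' : P ≤ m := Nat.le_of_dvd hm0 hPm
            apply iterate_eq_of_mod_factorial
            · exact le_trans hnx (by rw [hu]; exact Nat.le_add_right _ _)
            · exact hnx
            · show u % P = x % P
              rw [hu, Nat.add_mul_mod_self_right]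
          -- iterating any letter m times = iterating d times
          have hIter : ∀ (c : Fin 3) (q : σ), (fun q => M.step q c)^[m] q =
              (fun q => M.step q c)^[d] q := by
            intro c q
            apply iterate_eq_of_mod_factorial
            · exact le_trans (hnP.trans (Nat.le_of_dvd hm0 hPm)) le_rfl
            · exact hnP.trans hPd
            · show m % P = d % P
              obtain ⟨e, he⟩ := hPm
              obtain ⟨f, hf⟩ := hdvd
              rw [he, hf, Nat.mul_mod_right, Nat.mul_mod_right]
          have transfer : ∀ c : Fin 3,
              ((List.replicate u (0 : Fin 3) ++ List.replicate m c) ∈ M.accepts ↔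
                (List.replicate x (0 : Fin 3) ++ List.replicate d c) ∈ M.accepts) := by
            intro c
            rw [hmem, hmem, hB, hIter]
          constructor
          · intro hR
            apply hanti_xy.1
            have h1 : (List.replicate u (0 : Fin 3) ++ List.replicate m 2) ∈ M.accepts := by
              rw [hM]
              exact (mem_lang_BR hm0).mpr (hum ▸ hR)
            have h2 := (transfer 2).mp h1
            rw [hM] at h2
            have := (mem_lang_BR (R := R) hd0).mp h2
            rwa [← hy] at this
          · intro hR
            apply hanti_xy.2
            have h1 : (List.replicate u (0 : Fin 3) ++ List.replicate m 1) ∈ M.accepts := by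
              rw [hM]
              exact (mem_lang_BL hm0).mpr (hum ▸ hR)
            have h2 := (transfer 1).mp h1
            rw [hM] at h2
            have := (mem_lang_BL (R := R) hd0).mp h2
            rwa [← hy] at this
        rintro z ⟨i, rfl⟩ w ⟨j, rfl⟩ hne
        have hij : i ≠ j := by rintro rfl; exact hne rfl
        rcases hij.lt_or_gt with h | h
        · exact main i j h
        · exact ⟨(main j i h).2, (main j i h).1⟩
    -- find such x and y using pigeonhole
    have hA' : (A \ {z | z < n}).Infinite := hAinf.diff (Set.finite_Iio n)
    obtain ⟨S, hSsub, hScard⟩ := hA'.exists_subset_card_eq (P + 1)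
    obtain ⟨b, hbS, c, hcS, hbc, hmod⟩ :=
      Finset.exists_ne_map_eq_of_card_lt_of_maps_to
        (s := S) (t := Finset.range P) (by simp [hScard])
        (fun z _ => Finset.mem_range.mpr (Nat.mod_lt z hP0))
    have hbA := hSsub hbS
    have hcA := hSsub hcS
    simp only [Set.mem_diff, Set.mem_setOf_eq, not_lt] at hbA hcA
    rcases hbc.lt_or_gt with hlt | hlt
    · exact key b c hbA.1 hcA.1 hbA.2 hlt
        ((Nat.modEq_iff_dvd' hlt.le).mp hmod)
    · exact key c b hcA.1 hbA.1 hcA.2 hlt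
        ((Nat.modEq_iff_dvd' hlt.le).mp hmod.symm)
  · rintro ⟨a, p, hp, hanti⟩
    refine ⟨{x | ∃ k : ℕ, x = a + k * p}, ?_, hanti⟩
    apply Set.infinite_of_injective_forall_mem
      (f := fun k : ℕ => a + k * p)
    · intro i j hij
      simp only at hij
      exact Nat.eq_of_mul_eq_mul_right hp (by omega)
    · intro k
      exact ⟨k, rfl⟩
end
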